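/- arXiv:1908.10914 — 9 statements merged into one kernel-verified Lean document; each statement's English description precedes it below -/
import Mathlib

section
/- Let (V, H) be a hypergraph with no isolated vertices, where V is finite with |V| > n². Then (V, H) contains a partition of size greater than n: there exist D ⊆ V with |D| > n and P ⊆ H such that every element of D is contained in exactly one member of P. -/
/-!
If some edge has more than `n` vertices, that edge alone is the partition. Otherwise take an
inclusion-minimal finite cover `C ⊆ H` of `V`: by minimality every member of `C` has a private
vertex, covered by no other member, so at least `|C|` vertices lie in exactly one member of `C`;
and since every edge has at most `n` vertices, `n² < |V| ≤ n |C|` forces `|C| > n`.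
-/

open Finset

section

variable {V : Type*}

def IsFinsetCoverFrom (H : Set (Set V)) (C : Finset (Set V)) : Prop :=
  ↑C ⊆ H ∧ ∀ v, ∃ E ∈ C, v ∈ E

theorem exists_minimal_finset_cover [Finite V] {H : Set (Set V)}
    (hH : ∀ v : V, ∃ E ∈ H, v ∈ E) :
    ∃ C : Finset (Set V), Minimal (IsFinsetCoverFrom H) C := by
  choose f hfH hf using hH
  refine exists_minimal_of_wellFoundedLT _ ⟨(Set.finite_range f).toFinset, ?_, fun v => ?_⟩
  · simpa [Set.range_subset_iff] using hfH
  · exact ⟨f v, by simp, hf v⟩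

theorem exists_private_mem_of_minimal_cover {H : Set (Set V)} {C : Finset (Set V)}
    (hC : Minimal (IsFinsetCoverFrom H) C)
    {E : Set V} (hE : E ∈ C) : ∃ v ∈ E, ∀ F ∈ C, v ∈ F → F = E := by
  by_contra! hshared
  have hcover : ∀ v, ∃ F ∈ C.erase E, v ∈ F := by
    intro v
    obtain ⟨F, hF, hvF⟩ := hC.prop.2 v
    by_cases hFE : F = E
    · subst hFE
      obtain ⟨G, hG, hvG, hGF⟩ := hshared v hvF
      exact ⟨G, mem_erase.2 ⟨hGF, hG⟩, hvG⟩
    · exact ⟨F, mem_erase.2 ⟨hFE, hF⟩, hvF⟩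
  have hsub : C ⊆ C.erase E :=
    hC.2 ⟨(coe_subset.2 (erase_subset E C)).trans hC.prop.1, hcover⟩ (erase_subset E C)
  exact notMem_erase E C (hsub hE)

open Classical in
theorem card_le_card_filter_existsUnique_mem [Fintype V] {C : Finset (Set V)}
    (hC : ∀ E ∈ C, ∃ v ∈ E, ∀ F ∈ C, v ∈ F → F = E) :
    #C ≤ #{v | ∃! E, E ∈ C ∧ v ∈ E} := by
  refine card_le_card_of_forall_subsingleton (fun E v => v ∈ E) (fun E hE => ?_) ?_
  · obtain ⟨v, hvE, hv⟩ := hC E hE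
    exact ⟨v, mem_filter.2 ⟨mem_univ v, E, ⟨hE, hvE⟩, fun F hF => hv F hF.1 hF.2⟩, hvE⟩
  · intro v hv E₁ hE₁ E₂ hE₂
    exact (mem_filter.1 hv).2.unique hE₁ hE₂

theorem card_le_card_mul_of_cover [Finite V] {C : Finset (Set V)} {n : ℕ}
    (hcover : ∀ v, ∃ E ∈ C, v ∈ E) (hsmall : ∀ E ∈ C, E.ncard ≤ n) :
    Nat.card V ≤ #C * n := by
  have hunion : (⋃ E ∈ C, E) = Set.univ :=
    Set.eq_univ_of_forall fun v => by simpa using hcover v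
  calc Nat.card V = (⋃ E ∈ C, E).ncard := by rw [hunion, Set.ncard_univ]
    _ ≤ ∑ E ∈ C, E.ncard := C.set_ncard_biUnion_le id
    _ ≤ #C * n := sum_le_card_nsmul C _ n hsmall

end

theorem finite_hypergraph_partition {V : Type*} [Fintype V] (H : Set (Set V)) (n : ℕ)
    (hno : ∀ v : V, ∃ E ∈ H, v ∈ E) (hcard : Fintype.card V > n ^ 2) :
    ∃ (D : Finset V) (P : Set (Set V)), P ⊆ H ∧ D.card > n ∧
      ∀ v ∈ D, ∃! E, E ∈ P ∧ v ∈ E := by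
  classical
  by_cases hbig : ∃ E ∈ H, n < E.ncard
  · obtain ⟨E, hE, hEcard⟩ := hbig
    refine ⟨E.toFinset, {E}, Set.singleton_subset_iff.2 hE, ?_, fun v hv => ?_⟩
    · rwa [← Set.ncard_eq_toFinset_card']
    · exact ⟨E, ⟨rfl, Set.mem_toFinset.1 hv⟩, fun F hF => hF.1⟩
  push Not at hbig
  obtain ⟨C, hC⟩ := exists_minimal_finset_cover hno
  have hCcard : n < #C := by
    have hle := card_le_card_mul_of_cover hC.prop.2 fun E hE => hbig E (hC.prop.1 hE)
    rw [Nat.card_eq_fintype_card] at hle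
    nlinarith
  refine ⟨({v | ∃! E, E ∈ C ∧ v ∈ E} : Finset V), ↑C, hC.prop.1, ?_,
    fun v hv => (mem_filter.1 hv).2⟩
  exact hCcard.trans_le
    (card_le_card_filter_existsUnique_mem fun E hE => exists_private_mem_of_minimal_cover hC hE)
end

section
/- Let (V, H) be a hypergraph (V possibly infinite) with no isolated vertices and |V| > n² (in the sense that V has a finite subset of size greater than n²). Then (V, H) contains a partition of size greater than n. -/
/-!
Fix a finite set `W` of more than `n²` vertices. If some edge meets `W` in more than `n` points,
that edge alone is the partition. Otherwise take a cover of `W` by finitely many edges of minimal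
size: minimality gives every edge of the cover a private vertex in `W`, lying in no other edge of
the cover, and since each edge covers at most `n` points of `W`, the cover has more than `n`
edges. The private vertices, together with the cover, form the partition.
-/

namespace Hypergraph

variable {V : Type*}

def UniquelyCovers (P : Set (Set V)) (D : Finset V) : Prop :=
  ∀ v ∈ D, ∃! E, E ∈ P ∧ v ∈ E

def Covers (𝒬 : Finset (Set V)) (W : Finset V) : Prop :=
  ∀ v ∈ W, ∃ E ∈ 𝒬, v ∈ E

lemma exists_finset_subset_covers {H : Set (Set V)} {W : Finset V}
    (hW : ∀ v ∈ W, ∃ E ∈ H, v ∈ E) : ∃ 𝒬 : Finset (Set V), ↑𝒬 ⊆ H ∧ Covers 𝒬 W := by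
  classical
  choose f hfH hf using hW
  refine ⟨W.attach.image fun v => f v.1 v.2, ?_, fun v hv => ⟨f v hv, ?_, hf v hv⟩⟩
  · intro E hE
    obtain ⟨v, -, rfl⟩ := Finset.mem_image.mp hE
    exact hfH v.1 v.2
  · exact Finset.mem_image_of_mem _ (Finset.mem_attach _ ⟨v, hv⟩)

lemma Covers.erase_of_forall_mem_other [DecidableEq (Set V)] {𝒬 : Finset (Set V)}
    {W : Finset V} (h𝒬 : Covers 𝒬 W) {E : Set V}
    (hE : ∀ w ∈ W, w ∈ E → ∃ F ∈ 𝒬, w ∈ F ∧ F ≠ E) : Covers (𝒬.erase E) W := by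
  intro v hv
  obtain ⟨F, hF, hvF⟩ := h𝒬 v hv
  by_cases hFE : F = E
  · obtain ⟨F', hF', hvF', hF'E⟩ := hE v hv (hFE ▸ hvF)
    exact ⟨F', Finset.mem_erase.mpr ⟨hF'E, hF'⟩, hvF'⟩
  · exact ⟨F, Finset.mem_erase.mpr ⟨hFE, hF⟩, hvF⟩

/-- A cover of minimal size has a private vertex in each of its members. -/
lemma Covers.exists_subcover_private {𝒬 : Finset (Set V)} {W : Finset V}
    (h𝒬 : Covers 𝒬 W) :
    ∃ 𝒬' ⊆ 𝒬, Covers 𝒬' W ∧ ∀ E ∈ 𝒬', ∃ w ∈ W, w ∈ E ∧ ∀ F ∈ 𝒬', w ∈ F → F = E := by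
  classical
  obtain ⟨𝒬', h𝒬'mem, hmin⟩ := (𝒬.powerset.filter (Covers · W)).exists_min_image
    Finset.card ⟨𝒬, Finset.mem_filter.mpr ⟨Finset.mem_powerset_self 𝒬, h𝒬⟩⟩
  obtain ⟨h𝒬'sub, h𝒬'⟩ := Finset.mem_filter.mp h𝒬'mem
  refine ⟨𝒬', Finset.mem_powerset.mp h𝒬'sub, h𝒬', fun E hE => ?_⟩
  by_contra! hpriv
  have hcovers : Covers (𝒬'.erase E) W := h𝒬'.erase_of_forall_mem_other hpriv
  have hle := hmin (𝒬'.erase E) <| Finset.mem_filter.mpr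
    ⟨Finset.mem_powerset.mpr ((Finset.erase_subset _ _).trans
      (Finset.mem_powerset.mp h𝒬'sub)), hcovers⟩
  exact (Finset.card_erase_lt_of_mem hE).not_ge hle

open Classical in
lemma Covers.card_le_card_mul {𝒬 : Finset (Set V)} {W : Finset V}
    (h𝒬 : Covers 𝒬 W) {n : ℕ} (hn : ∀ E ∈ 𝒬, (W.filter (· ∈ E)).card ≤ n) :
    W.card ≤ 𝒬.card * n := by
  refine (Finset.card_le_card fun v hv => ?_).trans (Finset.card_biUnion_le_card_mul 𝒬 _ n hn)
  obtain ⟨E, hE, hvE⟩ := h𝒬 v hv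
  exact Finset.mem_biUnion.mpr ⟨E, hE, Finset.mem_filter.mpr ⟨hv, hvE⟩⟩

lemma exists_uniquelyCovers_of_private {𝒬 : Finset (Set V)}
    (hpriv : ∀ E ∈ 𝒬, ∃ w, w ∈ E ∧ ∀ F ∈ 𝒬, w ∈ F → F = E) :
    ∃ D : Finset V, D.card = 𝒬.card ∧ UniquelyCovers ↑𝒬 D := by
  classical
  choose w hwE hwuniq using hpriv
  have hinj : Function.Injective fun E : 𝒬 => w E.1 E.2 := by
    rintro ⟨E, hE⟩ ⟨F, hF⟩ (h : w E hE = w F hF)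
    exact Subtype.ext (hwuniq E hE F hF (h ▸ hwE F hF)).symm
  refine ⟨𝒬.attach.image fun E => w E.1 E.2, by
    rw [Finset.card_image_of_injective _ hinj, Finset.card_attach], fun v hv => ?_⟩
  obtain ⟨⟨E, hE⟩, -, rfl⟩ := Finset.mem_image.mp hv
  exact ⟨E, ⟨hE, hwE E hE⟩, fun F ⟨hF, hvF⟩ => hwuniq E hE F hF hvF⟩

end Hypergraph

open Hypergraph in
theorem hypergraph_partition {V : Type*} (H : Set (Set V)) (n : ℕ)
    (hno : ∀ v : V, ∃ E ∈ H, v ∈ E) (hcard : ∃ W : Finset V, W.card > n ^ 2) :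
    ∃ (D : Finset V) (P : Set (Set V)), P ⊆ H ∧ D.card > n ∧
      ∀ v ∈ D, ∃! E, E ∈ P ∧ v ∈ E := by
  classical
  obtain ⟨W, hW⟩ := hcard
  by_cases hbig : ∃ E ∈ H, n < (W.filter (· ∈ E)).card
  · obtain ⟨E, hE, hn⟩ := hbig
    refine ⟨W.filter (· ∈ E), {E}, Set.singleton_subset_iff.mpr hE, hn, fun v hv => ?_⟩
    exact ⟨E, ⟨rfl, (Finset.mem_filter.mp hv).2⟩, fun F hF => hF.1⟩
  push Not at hbig
  obtain ⟨𝒬, h𝒬H, h𝒬⟩ := exists_finset_subset_covers fun v _ => hno v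
  obtain ⟨𝒬', h𝒬'sub, h𝒬', hpriv⟩ := h𝒬.exists_subcover_private
  have hWle : W.card ≤ 𝒬'.card * n :=
    h𝒬'.card_le_card_mul fun E hE => hbig E (h𝒬H (h𝒬'sub hE))
  have hn : n < 𝒬'.card := by
    by_contra! h
    nlinarith [Nat.mul_le_mul_right n h]
  obtain ⟨D, hD, hDuniq⟩ := exists_uniquelyCovers_of_private fun E hE =>
    (hpriv E hE).imp fun w hw => hw.2
  exact ⟨D, ↑𝒬', fun E hE => h𝒬H (h𝒬'sub hE), hD ▸ hn, hDuniq⟩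
end

section
/- Let (V, H) be a finite economical hypergraph. Then the map sending each hyperedge E ∈ H to some vertex isolated in (V, H \ {E}) is injective; in particular |H| ≤ |V|. -/
/-!
If `f E` meets no edge other than `E`, then, since every vertex is covered, `f E ∈ E`.
So `f E = f F` with `E ≠ F` would put `f F ∈ F`, an edge other than `E`, contradicting
the choice of `f E`. An injection `H → V` gives `|H| ≤ |V|`.
-/

namespace Set

variable {V : Type*} {H : Set (Set V)}

theorem mem_of_forall_notMem_diff_singleton (hcover : ∀ v : V, ∃ E ∈ H, v ∈ E)
    {E : Set V} {v : V} (hv : ∀ F ∈ H \ {E}, v ∉ F) : v ∈ E := by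
  obtain ⟨F, hF, hvF⟩ := hcover v
  by_contra hvE
  exact hv F ⟨hF, fun hFE => hvE (hFE ▸ hvF)⟩ hvF

theorem injOn_of_forall_notMem_diff_singleton (hcover : ∀ v : V, ∃ E ∈ H, v ∈ E)
    {f : Set V → V} (hf : ∀ E ∈ H, ∀ F ∈ H \ {E}, f E ∉ F) : InjOn f H := by
  intro E hE F hF hEF
  by_contra hne
  have hfF : f F ∈ F := mem_of_forall_notMem_diff_singleton hcover (hf F hF)
  exact hf E hE F ⟨hF, hne ∘ Eq.symm⟩ (hEF ▸ hfF)

end Set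

theorem economical_choice_injective_general {V : Type*} [Fintype V] (H : Set (Set V))
    (hno : ∀ v : V, ∃ E ∈ H, v ∈ E)
    (f : Set V → V) (hf : ∀ E ∈ H, ∀ F ∈ H \ {E}, f E ∉ F) :
    Set.InjOn f H ∧ H.ncard ≤ Fintype.card V := by
  have hinj : Set.InjOn f H := Set.injOn_of_forall_notMem_diff_singleton hno hf
  refine ⟨hinj, ?_⟩
  calc H.ncard ≤ (Set.univ : Set V).ncard :=
        Set.ncard_le_ncard_of_injOn f (fun _ _ => Set.mem_univ _) hinj Set.finite_univ
    _ = Fintype.card V := by rw [Set.ncard_univ, Nat.card_eq_fintype_card]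

theorem economical_choice_injective {V : Type*} [Fintype V] (H : Set (Set V))
    (hno : ∀ v : V, ∃ E ∈ H, v ∈ E)
    (hecon : ∀ E ∈ H, ∃ v : V, ∀ F ∈ H \ {E}, v ∉ F)
    (f : Set V → V) (hf : ∀ E ∈ H, ∀ F ∈ H \ {E}, f E ∉ F) :
    Set.InjOn f H ∧ H.ncard ≤ Fintype.card V :=
  economical_choice_injective_general H hno f hf
end

section
/- Let (V, H) be a finite economical hypergraph containing no partition of size greater than n. Then |H| ≤ n, and every hyperedge E ∈ H satisfies |E| ≤ n. -/
/-!
In an economical hypergraph every hyperedge contains a vertex lying in no other hyperedge. The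
vertices lying in exactly one hyperedge, together with all of `H`, form a partition of size at
least `|H|`; a single hyperedge `E`, together with all of its vertices, is a partition of size
`|E|`.
-/

namespace Hypergraph

variable {V : Type*}

def privateVertices (H : Set (Set V)) : Set V := {v | ∃! E, E ∈ H ∧ v ∈ E}

theorem exists_mem_privateVertices {H : Set (Set V)} (hno : ∀ v : V, ∃ E ∈ H, v ∈ E)
    (hecon : ∀ E ∈ H, ∃ v : V, ∀ F ∈ H \ {E}, v ∉ F) {E : Set V} (hE : E ∈ H) :
    ∃ v ∈ E, v ∈ privateVertices H := by
  obtain ⟨v, hv⟩ := hecon E hE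
  have honly : ∀ F ∈ H, v ∈ F → F = E := fun F hF hvF => by
    by_contra hne
    exact hv F ⟨hF, hne⟩ hvF
  obtain ⟨F, hF, hvF⟩ := hno v
  obtain rfl := honly F hF hvF
  exact ⟨v, hvF, F, ⟨hF, hvF⟩, fun G hG => honly G hG.1 hG.2⟩

theorem ncard_le_ncard_privateVertices [Finite V] {H : Set (Set V)}
    (hpriv : ∀ E ∈ H, ∃ v ∈ E, v ∈ privateVertices H) :
    H.ncard ≤ (privateVertices H).ncard := by
  choose f hfE hfpriv using hpriv
  rw [← Nat.card_coe_set_eq, ← Nat.card_coe_set_eq]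
  refine Nat.card_le_card_of_injective (fun E => ⟨f E E.2, hfpriv E E.2⟩) fun E F hEF => ?_
  have hfEF : f E E.2 = f F F.2 := congrArg Subtype.val hEF
  exact Subtype.ext ((hfpriv F F.2).unique ⟨E.2, hfEF ▸ hfE E E.2⟩ ⟨F.2, hfE F F.2⟩)

end Hypergraph

theorem economical_no_large_partition_bounds {V : Type*} [Fintype V] (H : Set (Set V)) (n : ℕ)
    (hno : ∀ v : V, ∃ E ∈ H, v ∈ E)
    (hecon : ∀ E ∈ H, ∃ v : V, ∀ F ∈ H \ {E}, v ∉ F)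
    (hpart : ¬ ∃ (D : Finset V) (P : Set (Set V)), P ⊆ H ∧ D.card > n ∧
      ∀ v ∈ D, ∃! E, E ∈ P ∧ v ∈ E) :
    H.ncard ≤ n ∧ ∀ E ∈ H, E.ncard ≤ n := by
  classical
  refine ⟨?_, fun E hE => ?_⟩
  · have hcard := Hypergraph.ncard_le_ncard_privateVertices fun E hE =>
      Hypergraph.exists_mem_privateVertices hno hecon hE
    by_contra! hlt
    refine hpart ⟨(Hypergraph.privateVertices H).toFinset, H, subset_rfl, ?_, fun v hv => ?_⟩
    · rw [← Set.ncard_eq_toFinset_card']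
      omega
    · exact (Set.mem_toFinset.1 hv : v ∈ Hypergraph.privateVertices H)
  · by_contra! hlt
    refine hpart ⟨E.toFinset, {E}, Set.singleton_subset_iff.2 hE, ?_, fun v hv => ?_⟩
    · rwa [← Set.ncard_eq_toFinset_card']
    · exact ⟨E, ⟨rfl, Set.mem_toFinset.1 hv⟩, fun F hF => hF.1⟩
end

section
/- Let (V, H) be a finite economical hypergraph containing no partition of size greater than n. Then |V| ≤ Σ_{k=1}^{n} n/k (where the sum is over real numbers). -/
/-!
Every vertex in the private part of an edge (the vertices lying in no other edge) lies in exactly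
one edge, so the union of the private parts is partitioned by the hypergraph; as the private parts
are pairwise disjoint, their sizes add up to at most `n`. Among `m` edges some edge therefore has
a private part of size at most `⌊n / m⌋`, and deleting that edge uncovers only its private part.
By induction `m` edges cover at most `∑_{k ≤ m} ⌊n / k⌋` vertices, and the terms with `k > n`
vanish.
-/

open Finset

section PrivatePart

variable {ι α : Type*} [DecidableEq ι] [DecidableEq α]

def privatePart (𝓗 : Finset ι) (e : ι → Finset α) (i : ι) : Finset α :=
  e i \ (𝓗.erase i).biUnion e

variable {𝓗 : Finset ι} {e : ι → Finset α}

theorem mem_privatePart {i : ι} {v : α} :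
    v ∈ privatePart 𝓗 e i ↔ v ∈ e i ∧ ∀ j ∈ 𝓗, j ≠ i → v ∉ e j := by
  simp only [privatePart, mem_sdiff, mem_biUnion, mem_erase, not_exists, not_and, and_imp]
  exact and_congr_right fun _ => ⟨fun h j hj hji => h j hji hj, fun h j hji hj => h j hj hji⟩

theorem existsUnique_of_mem_privatePart {i : ι} {v : α} (hi : i ∈ 𝓗)
    (hv : v ∈ privatePart 𝓗 e i) : ∃! j, j ∈ 𝓗 ∧ v ∈ e j := by
  rw [mem_privatePart] at hv
  exact ⟨i, ⟨hi, hv.1⟩, fun j ⟨hj, hvj⟩ => by_contra fun hji => hv.2 j hj hji hvj⟩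

theorem pairwiseDisjoint_privatePart : (𝓗 : Set ι).PairwiseDisjoint (privatePart 𝓗 e) := by
  intro i hi j _ hij
  refine disjoint_left.2 fun v hvi hvj => ?_
  exact (mem_privatePart.1 hvj).2 i hi hij (mem_privatePart.1 hvi).1

theorem card_biUnion_eq_card_biUnion_erase_add {i : ι} (hi : i ∈ 𝓗) :
    #(𝓗.biUnion e) = #((𝓗.erase i).biUnion e) + #(privatePart 𝓗 e i) := by
  rw [privatePart, add_comm, card_sdiff_add_card, ← biUnion_insert, insert_erase hi]

theorem sum_card_privatePart_le {n : ℕ}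
    (h : ∀ D : Finset α, (∀ v ∈ D, ∃! j, j ∈ 𝓗 ∧ v ∈ e j) → #D ≤ n) :
    ∑ i ∈ 𝓗, #(privatePart 𝓗 e i) ≤ n := by
  rw [← card_biUnion pairwiseDisjoint_privatePart]
  refine h _ fun v hv => ?_
  obtain ⟨i, hi, hvi⟩ := mem_biUnion.1 hv
  exact existsUnique_of_mem_privatePart hi hvi

theorem exists_card_privatePart_le_div {n : ℕ} (h𝓗 : 𝓗.Nonempty)
    (h : ∀ D : Finset α, (∀ v ∈ D, ∃! j, j ∈ 𝓗 ∧ v ∈ e j) → #D ≤ n) :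
    ∃ i ∈ 𝓗, #(privatePart 𝓗 e i) ≤ n / #𝓗 := by
  obtain ⟨i, hi, hmin⟩ := exists_min_image 𝓗 (fun j => #(privatePart 𝓗 e j)) h𝓗
  refine ⟨i, hi, (Nat.le_div_iff_mul_le (card_pos.2 h𝓗)).2 ?_⟩
  calc #(privatePart 𝓗 e i) * #𝓗 = ∑ _j ∈ 𝓗, #(privatePart 𝓗 e i) := by
        rw [sum_const, smul_eq_mul, mul_comm]
    _ ≤ ∑ j ∈ 𝓗, #(privatePart 𝓗 e j) := sum_le_sum hmin
    _ ≤ n := sum_card_privatePart_le h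

theorem card_biUnion_le_sum_div (n : ℕ)
    (h : ∀ 𝓟 ⊆ 𝓗, ∀ D : Finset α, (∀ v ∈ D, ∃! j, j ∈ 𝓟 ∧ v ∈ e j) → #D ≤ n) :
    #(𝓗.biUnion e) ≤ ∑ k ∈ Icc 1 #𝓗, n / k := by
  induction 𝓗 using Finset.strongInduction with
  | H 𝓗 ih =>
    rcases 𝓗.eq_empty_or_nonempty with rfl | h𝓗
    · simp
    obtain ⟨i, hi, hsmall⟩ := exists_card_privatePart_le_div h𝓗 (h 𝓗 subset_rfl)
    have hrest := ih (𝓗.erase i) (erase_ssubset hi) fun 𝓟 h𝓟 =>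
      h 𝓟 (h𝓟.trans (erase_subset i 𝓗))
    obtain ⟨m, hm⟩ : ∃ m, #𝓗 = m + 1 := Nat.exists_eq_add_one.2 (card_pos.2 h𝓗)
    rw [card_erase_of_mem hi, hm, Nat.add_sub_cancel] at hrest
    calc #(𝓗.biUnion e) = #((𝓗.erase i).biUnion e) + #(privatePart 𝓗 e i) :=
          card_biUnion_eq_card_biUnion_erase_add hi
      _ ≤ ∑ k ∈ Icc 1 m, n / k + n / (m + 1) := by rw [hm] at hsmall; omega
      _ = ∑ k ∈ Icc 1 #𝓗, n / k := by rw [hm, sum_Icc_succ_top (by omega)]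

end PrivatePart

theorem sum_Icc_nat_div_le_sum_Icc_div (m n : ℕ) :
    ((∑ k ∈ Icc 1 m, n / k : ℕ) : ℝ) ≤ ∑ k ∈ Icc 1 n, (n : ℝ) / k := by
  have hvanish : ∑ k ∈ Icc 1 m, n / k ≤ ∑ k ∈ Icc 1 n, n / k := by
    refine sum_le_sum_of_ne_zero fun k hk hnk => mem_Icc.2 ⟨(mem_Icc.1 hk).1, ?_⟩
    by_contra! hlt
    exact hnk (Nat.div_eq_of_lt hlt)
  calc ((∑ k ∈ Icc 1 m, n / k : ℕ) : ℝ) ≤ ((∑ k ∈ Icc 1 n, n / k : ℕ) : ℝ) := by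
        exact_mod_cast hvanish
    _ ≤ ∑ k ∈ Icc 1 n, (n : ℝ) / k := by
        push_cast
        exact sum_le_sum fun k _ => Nat.cast_div_le

theorem economical_vertex_bound_general {V : Type*} [Fintype V] (H : Set (Set V)) (n : ℕ)
    (hno : ∀ v : V, ∃ E ∈ H, v ∈ E)
    (hpart : ¬ ∃ (D : Finset V) (P : Set (Set V)), P ⊆ H ∧ D.card > n ∧
      ∀ v ∈ D, ∃! E, E ∈ P ∧ v ∈ E) :
    (Fintype.card V : ℝ) ≤ ∑ k ∈ Finset.Icc 1 n, (n : ℝ) / k := by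
  classical
  have hcover : univ ⊆ H.toFinset.biUnion fun E => E.toFinset := fun v _ => by
    obtain ⟨E, hE, hvE⟩ := hno v
    exact mem_biUnion.2 ⟨E, Set.mem_toFinset.2 hE, Set.mem_toFinset.2 hvE⟩
  have hbound :
      #(H.toFinset.biUnion fun E => E.toFinset) ≤ ∑ k ∈ Icc 1 #H.toFinset, n / k := by
    refine card_biUnion_le_sum_div n fun 𝓟 h𝓟 D hD => ?_
    by_contra! hD_large
    refine hpart ⟨D, 𝓟, fun E hE => Set.mem_toFinset.1 (h𝓟 hE), hD_large, fun v hv => ?_⟩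
    simpa only [mem_coe, Set.mem_toFinset] using hD v hv
  calc (Fintype.card V : ℝ) ≤ #(H.toFinset.biUnion fun E => E.toFinset) := by
        exact_mod_cast card_le_card hcover
    _ ≤ _ := by exact_mod_cast hbound
    _ ≤ _ := sum_Icc_nat_div_le_sum_Icc_div _ n

theorem economical_vertex_bound {V : Type*} [Fintype V] (H : Set (Set V)) (n : ℕ)
    (hno : ∀ v : V, ∃ E ∈ H, v ∈ E)
    (hecon : ∀ E ∈ H, ∃ v : V, ∀ F ∈ H \ {E}, v ∉ F)
    (hpart : ¬ ∃ (D : Finset V) (P : Set (Set V)), P ⊆ H ∧ D.card > n ∧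
      ∀ v ∈ D, ∃! E, E ∈ P ∧ v ∈ E) :
    (Fintype.card V : ℝ) ≤ ∑ k ∈ Finset.Icc 1 n, (n : ℝ) / k :=
  economical_vertex_bound_general H n hno hpart
end

section
/- For all natural numbers n ≥ 1 and 1 ≤ k ≤ n: Σ_{j=k-1}^{n-1} C(n-k, j-k+1) / C(n-1, j) = n/k, where C denotes the binomial coefficient and the identity is among rational numbers. -/
/-!
Writing `m = n - 1` and `r = k - 1`, the identity `C(m, j) C(j, r) = C(m, r) C(m - r, j - r)` turns
every summand into `C(j, r) / C(m, r)`. The hockey-stick identity sums the numerators to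
`C(m + 1, r + 1)`, and `C(m + 1, r + 1) / C(m, r) = (m + 1) / (r + 1)`.
-/

open Finset

namespace Nat

variable {K : Type*} [Field K] [CharZero K]

theorem cast_choose_sub_div_cast_choose {m j r : ℕ} (hrj : r ≤ j) (hjm : j ≤ m) :
    ((m - r).choose (j - r) : K) / m.choose j = j.choose r / m.choose r := by
  have hmj : (m.choose j : K) ≠ 0 := by exact_mod_cast (choose_pos hjm).ne'
  have hmr : (m.choose r : K) ≠ 0 := by exact_mod_cast (choose_pos (hrj.trans hjm)).ne'
  rw [div_eq_div_iff hmj hmr, mul_comm, mul_comm (j.choose r : K)]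
  exact_mod_cast (choose_mul (n := m) hrj).symm

theorem sum_cast_choose_sub_div_cast_choose {m r : ℕ} (hrm : r ≤ m) :
    ∑ j ∈ Icc r m, ((m - r).choose (j - r) : K) / m.choose j = (m + 1 : K) / (r + 1) := by
  have hmr : (m.choose r : K) ≠ 0 := by exact_mod_cast (choose_pos hrm).ne'
  calc ∑ j ∈ Icc r m, ((m - r).choose (j - r) : K) / m.choose j
      = (∑ j ∈ Icc r m, (j.choose r : K)) / m.choose r := by
        rw [sum_div]
        refine sum_congr rfl fun j hj => ?_
        exact cast_choose_sub_div_cast_choose (mem_Icc.1 hj).1 (mem_Icc.1 hj).2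
    _ = ((m + 1).choose (r + 1) : K) / m.choose r := by
        rw [← sum_Icc_choose]; push_cast; rfl
    _ = (m + 1 : K) / (r + 1) := by
        rw [div_eq_div_iff hmr r.cast_add_one_ne_zero]
        exact_mod_cast (add_one_mul_choose_eq m r).symm

end Nat

theorem binom_ratio_sum_general (n k : ℕ) (hk1 : 1 ≤ k) (hk2 : k ≤ n) :
    ∑ j ∈ Finset.Icc (k - 1) (n - 1),
        ((n - k).choose (j + 1 - k) : ℚ) / ((n - 1).choose j : ℚ) = (n : ℚ) / k := by
  obtain ⟨r, rfl⟩ := Nat.exists_eq_add_of_le' hk1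
  obtain ⟨m, rfl⟩ := Nat.exists_eq_add_of_le' (hk1.trans hk2)
  simpa [Nat.add_sub_add_right] using
    Nat.sum_cast_choose_sub_div_cast_choose (K := ℚ) (Nat.le_of_add_le_add_right hk2)

theorem binom_ratio_sum (n k : ℕ) (hn : 1 ≤ n) (hk1 : 1 ≤ k) (hk2 : k ≤ n) :
    ∑ j ∈ Finset.Icc (k - 1) (n - 1),
        ((n - k).choose (j + 1 - k) : ℚ) / ((n - 1).choose j : ℚ) = (n : ℚ) / k :=
  binom_ratio_sum_general n k hk1 hk2
end

section
/- For every natural number n ≥ 1, the n-th harmonic number H_n = Σ_{k=1}^n 1/k satisfies H_n < ln n + γ + 1/(2n), where γ is the Euler–Mascheroni constant. -/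
/-!
The sequence `H_n - log n - 1/(2n)` increases strictly to `γ`: its increments are positive
because `log (x + 1) - log x` is below the trapezoid value `(1/x + 1/(x+1))/2`, which is
`t < sinh t` at `t = log (1 + 1/x)`.
-/

open Real Filter Topology

lemma log_lt_half_sub_inv {y : ℝ} (hy : 1 < y) : log y < (y - y⁻¹) / 2 := by
  rw [← sinh_log (by linarith)]
  exact self_lt_sinh_iff.2 (log_pos hy)

lemma log_add_one_sub_log_lt {x : ℝ} (hx : 0 < x) :
    log (x + 1) - log x < (x⁻¹ + (x + 1)⁻¹) / 2 := by
  have hy : 1 < (x + 1) / x := by rw [lt_div_iff₀ hx]; linarith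
  rw [← log_div (by positivity) hx.ne']
  convert log_lt_half_sub_inv hy using 1
  field_simp
  ring

lemma strictMono_harmonic_sub_log_sub_inv_two_mul :
    StrictMono fun n : ℕ ↦ (harmonic n : ℝ) - log n - 1 / (2 * n) := by
  refine strictMono_nat_of_lt_succ fun n ↦ ?_
  rcases Nat.eq_zero_or_pos n with rfl | hn
  · norm_num
  have hlog := log_add_one_sub_log_lt (x := n) (by exact_mod_cast hn)
  simp only [harmonic_succ, Rat.cast_add, Rat.cast_inv, Rat.cast_natCast, Nat.cast_add,
    Nat.cast_one, one_div, mul_inv] at hlog ⊢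
  linarith

lemma tendsto_harmonic_sub_log_sub_inv_two_mul :
    Tendsto (fun n : ℕ ↦ (harmonic n : ℝ) - log n - 1 / (2 * n)) atTop
      (𝓝 eulerMascheroniConstant) := by
  have h : Tendsto (fun n : ℕ ↦ 1 / (2 * (n : ℝ))) atTop (𝓝 0) := by
    simpa only [one_div, mul_inv, mul_zero] using
      (tendsto_inv_atTop_nhds_zero_nat (𝕜 := ℝ)).const_mul 2⁻¹
  simpa using tendsto_harmonic_sub_log.sub h

theorem harmonic_lt_log_add_gamma_general (n : ℕ) :
    ∑ k ∈ Finset.Icc 1 n, (1 : ℝ) / k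
      < Real.log n + Real.eulerMascheroniConstant + 1 / (2 * n) := by
  have hsum : ∑ k ∈ Finset.Icc 1 n, (1 : ℝ) / k = harmonic n := by
    simp [harmonic_eq_sum_Icc, one_div]
  have hlt := strictMono_harmonic_sub_log_sub_inv_two_mul (Nat.lt_succ_self n)
  have hle := strictMono_harmonic_sub_log_sub_inv_two_mul.monotone.ge_of_tendsto
    tendsto_harmonic_sub_log_sub_inv_two_mul (n + 1)
  simp only at hlt hle
  linarith

theorem harmonic_lt_log_add_gamma (n : ℕ) (hn : 1 ≤ n) :
    ∑ k ∈ Finset.Icc 1 n, (1 : ℝ) / k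
      < Real.log n + Real.eulerMascheroniConstant + 1 / (2 * n) :=
  harmonic_lt_log_add_gamma_general n
end

section
/- Let (a^i)_{i ∈ ℕ} be a countable family of conditionally convergent series of real numbers, and fix i ∈ ℕ. Then there exists a set A ⊆ ℕ such that Σ_{n ∈ A} a^i_n = +∞, and A is tame with respect to the family: for each j ∈ ℕ, all but finitely many of the nonzero terms a^j_n with n ∈ A have the same sign. -/
open Filter

/-- A series is conditionally convergent. -/
def CondConv (a : ℕ → ℝ) : Prop :=
  (∃ L : ℝ, Tendsto (fun N => ∑ n ∈ Finset.range N, a n) atTop (nhds L)) ∧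
    ¬ ∃ L : ℝ, Tendsto (fun N => ∑ n ∈ Finset.range N, |a n|) atTop (nhds L)

/-!
Let `b = a i`. Since `b` converges but not absolutely, its positive part has infinite sum, so
the set `S₀` of positive terms carries infinite `b`-mass. From a set `Sⱼ` of infinite mass we
take a finite chunk `Fⱼ ⊆ Sⱼ` of mass at least `1`; what is left, `Sⱼ \ Fⱼ`, still has infinite
mass, so one of its two parts on which `a j` is positive, resp. nonpositive, has infinite mass
too: call it `Sⱼ₊₁`. The chunks are pairwise disjoint, so `A = ⋃ Fⱼ` has infinite mass, and
all but the finitely many points of `F₀ ∪ ⋯ ∪ Fⱼ` lie in `Sⱼ₊₁`, on which `a j` has constant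
sign.
-/

open scoped ENNReal
open Function

section InfiniteMass

variable {α : Type*} (w : α → ℝ≥0∞)

lemma tsum_inter_eq_top_or_tsum_diff_eq_top {S : Set α} (hS : ∑' x : S, w x = ∞)
    (P : Set α) : ∑' x : ↑(S ∩ P), w x = ∞ ∨ ∑' x : ↑(S \ P), w x = ∞ := by
  rw [← ENNReal.add_eq_top, ← top_le_iff, ← hS]
  calc ∑' x : S, w x = ∑' x : ↑(S ∩ P ∪ S \ P), w x := by rw [Set.inter_union_sdiff]
    _ ≤ _ := ENNReal.tsum_union_le w _ _

lemma tsum_diff_finset_eq_top (hw : ∀ x, w x ≠ ∞) {S : Set α} (hS : ∑' x : S, w x = ∞)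
    (G : Finset α) : ∑' x : ↑(S \ G), w x = ∞ := by
  refine (tsum_inter_eq_top_or_tsum_diff_eq_top w hS G).resolve_left
    (ne_top_of_le_ne_top ?_ (ENNReal.tsum_mono_subtype w Set.inter_subset_right))
  rw [Finset.tsum_subtype']
  exact ENNReal.sum_ne_top.2 fun x _ => hw x

lemma exists_finset_subset_lt_sum {S : Set α} (hS : ∑' x : S, w x = ∞) {c : ℝ≥0∞}
    (hc : c < ∞) : ∃ F : Finset α, ↑F ⊆ S ∧ c < ∑ x ∈ F, w x := by
  rw [← hS, ENNReal.tsum_eq_iSup_sum] at hc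
  obtain ⟨s, hs⟩ := lt_iSup_iff.1 hc
  exact ⟨s.map (Function.Embedding.subtype _), by simp, by simpa using hs⟩

lemma exists_finset_and_homogeneous_subset_diff (hw : ∀ x, w x ≠ ∞) {S : Set α}
    (hS : ∑' x : S, w x = ∞) (P : Set α) :
    ∃ F : Finset α, ∃ T : Set α, ↑F ⊆ S ∧ 1 ≤ ∑ x ∈ F, w x ∧ T ⊆ S \ F ∧ (T ⊆ P ∨ T ⊆ Pᶜ) ∧
      ∑' x : T, w x = ∞ := by
  obtain ⟨F, hFS, hF⟩ := exists_finset_subset_lt_sum w hS ENNReal.one_lt_top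
  rcases tsum_inter_eq_top_or_tsum_diff_eq_top w (tsum_diff_finset_eq_top w hw hS F) P with h | h
  · exact ⟨F, _, hFS, hF.le, Set.inter_subset_left, .inl Set.inter_subset_right, h⟩
  · exact ⟨F, _, hFS, hF.le, Set.sdiff_subset, .inr fun x hx => hx.2, h⟩

lemma tsum_iUnion_finset_eq_top {F : ℕ → Finset α}
    (hd : Pairwise (Disjoint on fun k => (F k : Set α))) (hF : ∀ k, 1 ≤ ∑ x ∈ F k, w x) :
    ∑' x : ⋃ k, (F k : Set α), w x = ∞ := by
  rw [ENNReal.tsum_biUnion fun j _ k _ hjk => hd hjk, ← top_le_iff,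
    ← ENNReal.tsum_const_eq_top_of_ne_zero (α := ℕ) one_ne_zero]
  refine ENNReal.tsum_le_tsum fun k => ?_
  rw [Finset.tsum_subtype']
  exact hF k

end InfiniteMass

section NestedChunks

variable {α : Type*} {F : ℕ → Finset α} {S : ℕ → Set α}

lemma pairwise_disjoint_of_subset_diff (hFS : ∀ j, ↑(F j) ⊆ S j)
    (hS : ∀ j, S (j + 1) ⊆ S j \ F j) : Pairwise (Disjoint on fun k => (F k : Set α)) := by
  have hanti : Antitone S := antitone_nat_of_succ_le fun j => (hS j).trans Set.sdiff_subset
  refine (pairwise_disjoint_on _).2 fun j k hjk => Set.disjoint_right.2 fun x hxk hxj => ?_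
  exact (hS j (hanti hjk (hFS k hxk))).2 hxj

lemma finite_iUnion_diff_of_subset (hFS : ∀ j, ↑(F j) ⊆ S j) (hS : Antitone S) (j : ℕ) :
    ((⋃ k, (F k : Set α)) \ S j).Finite := by
  refine ((Finset.range j).finite_toSet.biUnion fun k _ => (F k).finite_toSet).subset ?_
  rintro x ⟨hx, hxS⟩
  obtain ⟨k, hk⟩ := Set.mem_iUnion.1 hx
  have hkj : k < j := by
    by_contra! hjk
    exact hxS (hS hjk (hFS k hk))
  exact Set.mem_biUnion (Finset.mem_coe.2 (Finset.mem_range.2 hkj)) hk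

end NestedChunks

theorem exists_subset_tsum_eq_top_and_finite_inter_or_finite_diff {α : Type*}
    (w : α → ℝ≥0∞) (hw : ∀ x, w x ≠ ∞) {S : Set α} (hS : ∑' x : S, w x = ∞)
    (P : ℕ → Set α) :
    ∃ A ⊆ S, ∑' x : A, w x = ∞ ∧ ∀ j, (A ∩ P j).Finite ∨ (A \ P j).Finite := by
  choose F T hFS hF hTS hTP hT using fun j (s : {S : Set α // ∑' x : S, w x = ∞}) =>
    exists_finset_and_homogeneous_subset_diff w hw s.2 (P j)
  let L : ℕ → {S : Set α // ∑' x : S, w x = ∞} := fun j =>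
    Nat.rec ⟨S, hS⟩ (fun j s => ⟨T j s, hT j s⟩) j
  have hchunk : ∀ j, ↑(F j (L j)) ⊆ (L j).1 := fun j => hFS j (L j)
  have hnext : ∀ j, (L (j + 1)).1 ⊆ (L j).1 \ F j (L j) := fun j => hTS j (L j)
  have hanti : Antitone fun j => (L j).1 :=
    antitone_nat_of_succ_le fun j => (hnext j).trans Set.sdiff_subset
  refine ⟨⋃ j, F j (L j), Set.iUnion_subset fun j => (hchunk j).trans (hanti j.zero_le),
    tsum_iUnion_finset_eq_top w (pairwise_disjoint_of_subset_diff hchunk hnext) fun j => hF j _,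
    fun j => ?_⟩
  have hfin := finite_iUnion_diff_of_subset hchunk hanti (j + 1)
  rcases hTP j (L j) with h | h
  · exact .inr (hfin.subset (Set.sdiff_subset_sdiff_right h))
  · exact .inl (hfin.subset fun x hx => ⟨hx.1, fun hxL => h hxL hx.2⟩)

lemma CondConv.tsum_ofReal_eq_top {b : ℕ → ℝ} (hb : CondConv b) :
    ∑' n, ENNReal.ofReal (b n) = ∞ := by
  by_contra h
  have hpos : Summable fun n => max (b n) 0 := by
    simpa only [ENNReal.toReal_ofReal'] using ENNReal.summable_toReal h
  obtain ⟨L, hL⟩ := hb.1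
  have habs : ∀ x : ℝ, |x| = 2 * max x 0 - x := fun x => by
    rcases le_total 0 x with hx | hx
    · rw [abs_of_nonneg hx, max_eq_left hx]; ring
    · rw [abs_of_nonpos hx, max_eq_right hx]; ring
  refine hb.2 ⟨2 * ∑' n, max (b n) 0 - L, ?_⟩
  simp only [habs, Finset.sum_sub_distrib, ← Finset.mul_sum]
  exact (hpos.hasSum.tendsto_sum_nat.const_mul 2).sub hL

lemma tendsto_sum_range_atTop_of_tsum_ofReal_eq_top {f : ℕ → ℝ} (hf : ∀ n, 0 ≤ f n)
    (h : ∑' n, ENNReal.ofReal (f n) = ∞) :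
    Tendsto (fun N => ∑ n ∈ Finset.range N, f n) atTop atTop := by
  refine (not_summable_iff_tendsto_nat_atTop_of_nonneg hf).1 fun hs => ?_
  exact ENNReal.ofReal_ne_top (h ▸ ENNReal.ofReal_tsum_of_nonneg hf hs)

theorem exists_tame_set_sending_to_infinity (a : ℕ → ℕ → ℝ)
    (ha : ∀ i, CondConv (a i)) (i : ℕ) :
    ∃ A : Set ℕ,
      Tendsto (fun N => ∑ n ∈ Finset.range N, A.indicator (a i) n) atTop atTop ∧
      ∀ j : ℕ, {n ∈ A | 0 < a j n}.Finite ∨ {n ∈ A | a j n < 0}.Finite := by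
  set w : ℕ → ℝ≥0∞ := fun n => ENNReal.ofReal (a i n)
  obtain ⟨A, hApos, hA, htame⟩ := exists_subset_tsum_eq_top_and_finite_inter_or_finite_diff w
    (fun _ => ENNReal.ofReal_ne_top) ((tsum_subtype_support w).trans (ha i).tsum_ofReal_eq_top)
    fun j => {n | 0 < a j n}
  have hnonneg : ∀ n, 0 ≤ A.indicator (a i) n := fun n => Set.indicator_apply_nonneg fun hn =>
    (ENNReal.ofReal_pos.1 (pos_iff_ne_zero.2 (hApos hn))).le
  rw [tsum_subtype, show A.indicator w = ENNReal.ofReal ∘ A.indicator (a i) from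
    Set.indicator_comp_of_zero ENNReal.ofReal_zero] at hA
  exact ⟨A, tendsto_sum_range_atTop_of_tsum_ofReal_eq_top hnonneg hA,
    fun j => (htame j).imp id fun h => h.subset fun n hn => ⟨hn.1, hn.2.not_gt⟩⟩
end

section
/- There exists a set X and a sequence of pairs of incompatible proper ideals (I_n, J_n) on X, n ∈ ℕ, such that no single set A ⊆ X chooses between I_n and J_n for infinitely many n. Concretely, taking X = 2^ℕ (Cantor space), with I_n the ideal of subsets of X nowhere dense in {x : x(n) = 0} and J_n the ideal of subsets nowhere dense in {x : x(n) = 1}, each pair (I_n, J_n) is a pair of incompatible proper ideals, and for every A ⊆ X the set of n such that A chooses between I_n and J_n is finite. -/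
structure IsIdeal {X : Type*} (I : Set (Set X)) : Prop where
  finite_mem : ∀ A : Set X, A.Finite → A ∈ I
  union_mem : ∀ A B : Set X, A ∈ I → B ∈ I → A ∪ B ∈ I
  subset_mem : ∀ A B : Set X, B ⊆ A → A ∈ I → B ∈ I

def IsProperIdeal {X : Type*} (I : Set (Set X)) : Prop :=
  IsIdeal I ∧ Set.univ ∉ I

def Incompatible {X : Type*} (I J : Set (Set X)) : Prop :=
  ∃ A : Set X, A ∈ I ∧ Aᶜ ∈ J

/-- `A` chooses between `I` and `J`. -/
def Chooses {X : Type*} (A : Set X) (I J : Set (Set X)) : Prop :=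
  (A ∈ I ∧ A ∉ J) ∨ (A ∈ J ∧ A ∉ I)

/-- The ideal of subsets of Cantor space that are nowhere dense in the
subspace `{x | x n = b}`. -/
def ndIdeal (n : ℕ) (b : Bool) : Set (Set (ℕ → Bool)) :=
  {A : Set (ℕ → Bool) |
    IsNowhereDense (Subtype.val ⁻¹' A : Set {x : ℕ → Bool // x n = b})}

/-! A set `A` lies in `ndIdeal n b` exactly when the open set `interior (closure A)` misses the
clopen half-space `{x | x n = b}`. If `interior (closure A)` is empty, `A` lies in all the ideals
and chooses nowhere. Otherwise it contains a basic cylinder, which fixes finitely many coordinates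
and meets both half-spaces of every other coordinate `n`; there `A` lies in neither ideal, so it
can choose only at the finitely many fixed coordinates. -/

open Set Filter Topology

section NowhereDense

variable {X : Type*} [TopologicalSpace X]

lemma IsNowhereDense.union {s t : Set X} (hs : IsNowhereDense s) (ht : IsNowhereDense t) :
    IsNowhereDense (s ∪ t) := by
  rw [IsNowhereDense, closure_union,
    interior_union_isClosed_of_interior_empty isClosed_closure ht, hs]

lemma Set.Finite.isNowhereDense [T1Space X] [∀ x : X, NeBot (𝓝[≠] x)] {s : Set X}
    (hs : s.Finite) : IsNowhereDense s := by
  refine hs.isClosed.isNowhereDense_iff.2 (eq_empty_of_forall_notMem fun x hx ↦ ?_)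
  exact infinite_of_mem_nhds x (mem_interior_iff_mem_nhds.1 hx) hs

lemma IsOpen.isNowhereDense_preimage_val_iff {U : Set X} (hU : IsOpen U) {s : Set X} :
    IsNowhereDense (Subtype.val ⁻¹' s : Set U) ↔ Disjoint U (interior (closure s)) := by
  have hval := hU.isOpenEmbedding_subtypeVal
  rw [IsNowhereDense, ← hval.isOpenMap.preimage_closure_eq_closure_preimage hval.continuous,
    ← hval.isOpenMap.preimage_interior_eq_interior_preimage hval.continuous,
    Subtype.preimage_coe_eq_empty, disjoint_iff_inter_eq_empty]

end NowhereDense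

section Product

variable {ι : Type*} {π : ι → Type*} [∀ i, TopologicalSpace (π i)]

/-- Flipping the `m`-th coordinate of `x` gives points `≠ x` converging to `x` as `m → ∞`. -/
instance Pi.nhdsNE_neBot [Infinite ι] [∀ i, Nontrivial (π i)] (x : ∀ i, π i) :
    NeBot (𝓝[≠] x) := by
  classical
  choose y hy using fun i ↦ exists_ne (x i)
  have hlim : Tendsto (fun m ↦ Function.update x m (y m)) cofinite (𝓝 x) :=
    tendsto_pi_nhds.2 fun i ↦ tendsto_const_nhds.congr' <|
      (eventually_cofinite_ne i).mono fun m hm ↦ (Function.update_of_ne hm.symm _ _).symm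
  refine (tendsto_nhdsWithin_of_tendsto_nhds_of_eventually_within (s := {x}ᶜ) _ hlim
    (Eventually.of_forall fun m (hm : _ = x) ↦ hy m ?_)).neBot
  simpa using congrFun hm m

lemma IsOpen.exists_finset_update_mem [DecidableEq ι] {W : Set (∀ i, π i)} (hW : IsOpen W)
    {x : ∀ i, π i} (hx : x ∈ W) :
    ∃ F : Finset ι, ∀ n ∉ F, ∀ b : π n, Function.update x n b ∈ W := by
  obtain ⟨F, u, hu, hFW⟩ := isOpen_pi_iff.1 hW x hx
  refine ⟨F, fun n hn b ↦ hFW fun i hi ↦ ?_⟩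
  have hin : i ≠ n := by rintro rfl; exact hn hi
  rw [Function.update_of_ne hin]
  exact (hu i hi).2

end Product

section IdealOfNowhereDense

variable {X : Type*} [TopologicalSpace X]

lemma isIdeal_setOf_isNowhereDense_preimage_val [T1Space X] [∀ x : X, NeBot (𝓝[≠] x)]
    {U : Set X} (hU : IsOpen U) :
    IsIdeal {A : Set X | IsNowhereDense (Subtype.val ⁻¹' A : Set U)} where
  finite_mem A hA := by
    rw [mem_ofPred_eq, hU.isNowhereDense_preimage_val_iff, hA.isNowhereDense]
    exact disjoint_bot_right
  union_mem _ _ hA hB := by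
    rw [mem_ofPred_eq, preimage_union]
    exact hA.union hB
  subset_mem _ _ hBA hA := hA.mono (preimage_mono hBA)

lemma isProperIdeal_setOf_isNowhereDense_preimage_val [T1Space X] [∀ x : X, NeBot (𝓝[≠] x)]
    {U : Set X} (hU : IsOpen U) (hne : U.Nonempty) :
    IsProperIdeal {A : Set X | IsNowhereDense (Subtype.val ⁻¹' A : Set U)} := by
  refine ⟨isIdeal_setOf_isNowhereDense_preimage_val hU, fun h ↦ hne.ne_empty ?_⟩
  rwa [mem_ofPred_eq, hU.isNowhereDense_preimage_val_iff, closure_univ, interior_univ,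
    disjoint_univ] at h

end IdealOfNowhereDense

lemma isOpen_setOf_apply_eq (n : ℕ) (b : Bool) : IsOpen {x : ℕ → Bool | x n = b} :=
  (isOpen_discrete {b}).preimage (continuous_apply n : Continuous fun x : ℕ → Bool ↦ x n)

lemma mem_ndIdeal_iff {n : ℕ} {b : Bool} {A : Set (ℕ → Bool)} :
    A ∈ ndIdeal n b ↔ Disjoint {x | x n = b} (interior (closure A)) :=
  (isOpen_setOf_apply_eq n b).isNowhereDense_preimage_val_iff

lemma isProperIdeal_ndIdeal (n : ℕ) (b : Bool) : IsProperIdeal (ndIdeal n b) :=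
  isProperIdeal_setOf_isNowhereDense_preimage_val (isOpen_setOf_apply_eq n b)
    ⟨fun _ ↦ b, rfl⟩

lemma mem_ndIdeal_of_disjoint {n : ℕ} {b : Bool} {A : Set (ℕ → Bool)}
    (h : Disjoint {x | x n = b} A) : A ∈ ndIdeal n b :=
  mem_ndIdeal_iff.2 <| (h.closure_right (isOpen_setOf_apply_eq n b)).mono_right interior_subset

lemma incompatible_ndIdeal (n : ℕ) : Incompatible (ndIdeal n false) (ndIdeal n true) :=
  ⟨{x | x n = true}, mem_ndIdeal_of_disjoint (disjoint_left.2 fun x h1 h2 ↦ by simp_all),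
    mem_ndIdeal_of_disjoint disjoint_compl_right⟩

lemma finite_setOf_chooses_ndIdeal (A : Set (ℕ → Bool)) :
    {n : ℕ | Chooses A (ndIdeal n false) (ndIdeal n true)}.Finite := by
  rcases eq_empty_or_nonempty (interior (closure A)) with hA | ⟨x, hx⟩
  · convert finite_empty
    refine eq_empty_of_forall_notMem fun n hn ↦ ?_
    simp only [mem_ofPred_eq, Chooses, mem_ndIdeal_iff, hA] at hn
    tauto
  · obtain ⟨F, hF⟩ := isOpen_interior.exists_finset_update_mem hx
    refine F.finite_toSet.subset fun n hn ↦ by_contra fun hnF ↦ ?_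
    have hnotMem (b : Bool) : A ∉ ndIdeal n b := by
      rw [mem_ndIdeal_iff, not_disjoint_iff]
      exact ⟨_, Function.update_self n b x, hF n hnF b⟩
    rcases hn with ⟨h, -⟩ | ⟨h, -⟩
    exacts [hnotMem false h, hnotMem true h]

theorem no_infinite_choosing :
    (∀ n : ℕ,
      IsProperIdeal (ndIdeal n false) ∧ IsProperIdeal (ndIdeal n true) ∧
        Incompatible (ndIdeal n false) (ndIdeal n true)) ∧
    ∀ A : Set (ℕ → Bool),
      {n : ℕ | Chooses A (ndIdeal n false) (ndIdeal n true)}.Finite :=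
  ⟨fun n ↦ ⟨isProperIdeal_ndIdeal n false, isProperIdeal_ndIdeal n true, incompatible_ndIdeal n⟩,
    finite_setOf_chooses_ndIdeal⟩
end
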